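/- Let G be a finite group, N a normal subgroup such that the quotient G/N is abelian, and V a finite-dimensional irreducible complex representation of G. If the restriction of V to N is not irreducible, then there exists a nontrivial one-dimensional complex representation χ of G that is trivial on N and satisfies V ⊗ χ ≅ V. -/

import Mathlib

/-!
`G` acts by conjugation on the space `End_N(V)` of `N`-equivariant endomorphisms of `V`, and these
operators commute because commutators lie in `N`, which acts trivially there. If `V|_N` is
reducible, Maschke's theorem gives an `N`-equivariant projection that is not a scalar, so by Schur
`End_N(V)` is not fixed by `G`. The kernel of the averaging map is then a nonzero `G`-stable
complement of the fixed points; a common eigenvector `e` there has a nontrivial eigencharacter `χ`,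
trivial on `N`, and `e` is a nonzero map `V ⊗ χ → V` of irreducible representations, hence
bijective.
-/

/-- A representation is irreducible if it is nonzero and has no proper nonzero
invariant subspaces. -/
def IsIrreducibleRep {k G V : Type*} [Field k] [Monoid G] [AddCommGroup V] [Module k V]
    (ρ : Representation k G V) : Prop :=
  (⊥ : Submodule k V) ≠ ⊤ ∧
    ∀ p : Submodule k V, (∀ g : G, ∀ v ∈ p, ρ g v ∈ p) → p = ⊥ ∨ p = ⊤

open Representation

namespace Module.End

variable {K W ι : Type*} [Field K] [IsAlgClosed K] [AddCommGroup W] [Module K W]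
  [FiniteDimensional K W]

-- A minimal nonzero invariant subspace lies in an eigenspace of each `f i`, since that eigenspace
-- meets it in a nonzero invariant subspace.
theorem exists_ne_zero_forall_eq_smul_of_commute (f : ι → End K W)
    (hf : ∀ i j, Commute (f i) (f j)) {p : Submodule K W} (hp : p ≠ ⊥)
    (hpf : ∀ i, p ∈ (f i).invtSubmodule) :
    ∃ v ∈ p, v ≠ 0 ∧ ∀ i, ∃ μ : K, f i v = μ • v := by
  obtain ⟨q, ⟨hqp, hq, hqf⟩, hmin⟩ := wellFounded_lt.has_min
    {q : Submodule K W | q ≤ p ∧ q ≠ ⊥ ∧ ∀ i, q ∈ (f i).invtSubmodule} ⟨p, le_rfl, hp, hpf⟩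
  have hq_le_eigenspace : ∀ i, ∃ μ : K, q ≤ (f i).eigenspace μ := by
    intro i
    have : Nontrivial q := Submodule.nontrivial_iff_ne_bot.mpr hq
    obtain ⟨μ, hμ⟩ := exists_eigenvalue ((f i).restrict (hqf i))
    obtain ⟨v, hv⟩ := hμ.exists_hasEigenvector
    have hv_mem : (v : W) ∈ q ⊓ (f i).eigenspace μ :=
      ⟨v.2, mem_eigenspace_iff.mpr congr(Subtype.val $(hv.apply_eq_smul))⟩
    refine ⟨μ, inf_eq_left.mp (by_contra fun hne => hmin _ ⟨inf_le_left.trans hqp, ?_, ?_⟩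
      (lt_of_le_of_ne inf_le_left hne))⟩
    · exact (Submodule.ne_bot_iff _).mpr ⟨v, hv_mem, by simpa using hv.2⟩
    · exact fun j => Sublattice.inf_mem (hqf j) <| (mem_invtSubmodule_iff_mapsTo _).mpr <|
        mapsTo_genEigenspace_of_comm (hf i j) μ 1
  obtain ⟨v, hv, hv0⟩ := Submodule.exists_mem_ne_zero_of_ne_bot hq
  exact ⟨v, hqp hv, hv0, fun i =>
    (hq_le_eigenspace i).imp fun μ hμ => mem_eigenspace_iff.mp (hμ hv)⟩

end Module.End

namespace IsIrreducibleRep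

variable {k G V : Type*} [Field k] [Monoid G] [AddCommGroup V] [Module k V]
  {ρ : Representation k G V}

theorem exists_eq_smul_id [IsAlgClosed k] [FiniteDimensional k V] (hρ : IsIrreducibleRep ρ)
    {f : V →ₗ[k] V} (hf : ρ.IsIntertwiningMap ρ f) : ∃ c : k, f = c • LinearMap.id := by
  have : Nontrivial V := (Submodule.nontrivial_iff k).mp ⟨_, _, hρ.1⟩
  obtain ⟨c, hc⟩ := Module.End.exists_eigenvalue f
  have hE : Module.End.eigenspace f c = ⊤ := (hρ.2 _ fun g v hv => ?_).resolve_left hc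
  · exact ⟨c, LinearMap.ext fun v => Module.End.mem_eigenspace_iff.mp (hE ▸ Submodule.mem_top)⟩
  · rw [Module.End.mem_eigenspace_iff] at hv ⊢
    rw [hf.isIntertwining, hv, map_smul]

theorem bijective_of_twist (hρ : IsIrreducibleRep ρ) (χ : G →* kˣ) {e : V →ₗ[k] V} (he : e ≠ 0)
    (h : ∀ g v, ρ g (e v) = (χ g : k) • e (ρ g v)) : Function.Bijective e := by
  have hker : LinearMap.ker e = ⊥ := by
    refine (hρ.2 _ fun g v hv => ?_).resolve_right fun htop => he (LinearMap.ker_eq_top.mp htop)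
    rw [LinearMap.mem_ker] at hv ⊢
    simpa [hv] using (h g v).symm
  have hrange : LinearMap.range e = ⊤ := by
    refine (hρ.2 _ fun g v hv => ?_).resolve_left fun hbot => he (LinearMap.range_eq_bot.mp hbot)
    obtain ⟨u, rfl⟩ := hv
    exact h g u ▸ Submodule.smul_mem _ _ (LinearMap.mem_range_self e _)
  exact ⟨LinearMap.ker_eq_bot.mp hker, LinearMap.range_eq_top.mp hrange⟩

end IsIrreducibleRep

theorem exists_isIntertwiningMap_ne_smul_id_of_not_isIrreducibleRep {k G V : Type*} [Field k]
    [Group G] [Finite G] [NeZero (Nat.card G : k)] [AddCommGroup V] [Module k V]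
    {ρ : Representation k G V} (hV : (⊥ : Submodule k V) ≠ ⊤) (hρ : ¬ IsIrreducibleRep ρ) :
    ∃ f : V →ₗ[k] V, ρ.IsIntertwiningMap ρ f ∧ ∀ c : k, f ≠ c • LinearMap.id := by
  obtain ⟨p, hpρ, hp⟩ : ∃ p : Submodule k V, (∀ g, ∀ v ∈ p, ρ g v ∈ p) ∧ p ≠ ⊥ ∧ p ≠ ⊤ := by
    simpa [IsIrreducibleRep, hV, not_or] using hρ
  obtain ⟨q, hpq⟩ := exists_isCompl (⟨p, fun g v hv => hpρ g v hv⟩ : Subrepresentation ρ)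
  have hpq' : IsCompl p q.toSubmodule :=
    ⟨disjoint_iff.mpr congr(Subrepresentation.toSubmodule $(hpq.disjoint.eq_bot)),
      codisjoint_iff.mpr congr(Subrepresentation.toSubmodule $(hpq.codisjoint.eq_top))⟩
  set π := p.projection q.toSubmodule hpq'
  refine ⟨π, ⟨fun g v => ?_⟩, fun c hc => ?_⟩
  · have hcomm : Commute π (ρ g) :=
      (LinearMap.IsIdempotentElem.commute_iff (Submodule.isIdempotentElem_projection hpq')).mpr
        ⟨by rw [Submodule.range_projection]; exact fun v hv => hpρ g v hv,
          by rw [Submodule.ker_projection]; exact fun v hv => q.apply_mem_toSubmodule g hv⟩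
    exact LinearMap.congr_fun hcomm.eq v
  · have hrange : LinearMap.range (c • LinearMap.id) = p := hc ▸ Submodule.range_projection hpq'
    rcases eq_or_ne c 0 with rfl | hc0
    · exact hp.1 (by simpa using hrange.symm)
    · exact hp.2 (hrange.symm.trans (LinearMap.range_eq_top.mpr fun v => ⟨c⁻¹ • v, by simp [hc0]⟩))

namespace Representation

variable {k H W : Type*} [Group H] [AddCommGroup W]

theorem exists_monoidHom_forall_eq_smul_of_ne_zero [Field k] [Module k W]
    (σ : Representation k H W) {w : W} (hw : w ≠ 0) (h : ∀ g, ∃ μ : k, σ g w = μ • w) :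
    ∃ χ : H →* kˣ, ∀ g, σ g w = (χ g : k) • w := by
  choose μ hμ using h
  have hcancel : ∀ a b : k, a • w = b • w → a = b := fun _ _ h => smul_left_injective k hw h
  let μ' : H →* k :=
    { toFun := μ
      map_one' := hcancel _ _ (by rw [← hμ, map_one, one_smul, Module.End.one_apply])
      map_mul' := fun g h => hcancel _ _ (by
        rw [← hμ, map_mul, Module.End.mul_apply, hμ, map_smul, hμ, smul_smul, mul_comm]) }
  exact ⟨μ'.toHomUnits, hμ⟩

theorem commute_toInvariants [CommRing k] [Module k W] (τ : Representation k H W)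
    (N : Subgroup H) [N.Normal] (hN : ∀ a b : H, a * b * a⁻¹ * b⁻¹ ∈ N) (g h : H) :
    Commute (τ.toInvariants N g) (τ.toInvariants N h) := by
  ext ⟨w, hw⟩
  have hcomm : g * h = h * g * (g⁻¹ * h⁻¹ * g * h) := by group
  have hfix : τ (g⁻¹ * h⁻¹ * g * h) w = w :=
    (mem_invariants _ w).mp hw ⟨g⁻¹ * h⁻¹ * g * h, by simpa using hN g⁻¹ h⁻¹⟩
  show τ g (τ h w) = τ h (τ g w)
  rw [← Module.End.mul_apply, ← map_mul, hcomm, map_mul, Module.End.mul_apply, hfix, map_mul,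
    Module.End.mul_apply]

theorem exists_ne_one_forall_eq_smul_of_commute [Field k] [IsAlgClosed k] [Module k W]
    [FiniteDimensional k W] [Fintype H] [Invertible (Fintype.card H : k)] (σ : Representation k H W)
    (hσ : ∀ g h, Commute (σ g) (σ h)) (hinv : σ.invariants ≠ ⊤) :
    ∃ χ : H →* kˣ, χ ≠ 1 ∧ ∃ w : W, w ≠ 0 ∧ ∀ g, σ g w = (χ g : k) • w := by
  set K := LinearMap.ker σ.averageMap
  have hK : K ≠ ⊥ := fun hbot => by
    have hsurj := LinearMap.injective_iff_surjective.mp (LinearMap.ker_eq_bot.mp hbot)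
    refine hinv (eq_top_iff.mpr fun v _ => ?_)
    obtain ⟨u, rfl⟩ := hsurj v
    exact σ.averageMap_invariant u
  have hKσ : ∀ g, K ∈ Module.End.invtSubmodule (σ g) := fun g v hv => by
    have : σ.averageMap (σ g v) = σ.averageMap v := by
      rw [averageMap, ← asAlgebraHom_single_one, ← Module.End.mul_apply, ← map_mul,
        GroupAlgebra.mul_average_right]
    rw [Submodule.mem_comap, LinearMap.mem_ker, this]
    exact hv
  obtain ⟨w, hwK, hw, hμ⟩ := Module.End.exists_ne_zero_forall_eq_smul_of_commute _ hσ hK hKσ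
  obtain ⟨χ, hχ⟩ := σ.exists_monoidHom_forall_eq_smul_of_ne_zero hw hμ
  refine ⟨χ, fun hχ1 => hw ?_, w, hw, hχ⟩
  rw [← σ.averageMap_id w fun g => by simp [hχ, hχ1]]
  exact hwK

end Representation

/-- Clifford-theoretic lemma: if `N` is a normal subgroup of a finite group `G` with
abelian quotient and `V` is an irreducible complex representation of `G` whose
restriction to `N` is not irreducible, then there is a nontrivial character `χ` of `G`
trivial on `N` with `V ⊗ χ ≅ V`. -/
theorem clifford_character_twist {G : Type*} [Group G] [Finite G] (N : Subgroup G)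
    [N.Normal] (habelian : ∀ a b : G, a * b * a⁻¹ * b⁻¹ ∈ N)
    {V : Type*} [AddCommGroup V] [Module ℂ V] [FiniteDimensional ℂ V]
    (ρ : Representation ℂ G V) (hρ : IsIrreducibleRep ρ)
    (hres : ¬ IsIrreducibleRep (ρ.comp N.subtype)) :
    ∃ χ : G →* ℂˣ, χ ≠ 1 ∧ (∀ n ∈ N, χ n = 1) ∧
      ∃ e : V ≃ₗ[ℂ] V, ∀ g : G, ∀ v : V, e ((χ g : ℂ) • ρ g v) = ρ g (e v) := by
  have : Fintype G := Fintype.ofFinite G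
  have : Invertible (Fintype.card G : ℂ) := invertibleOfNonzero (by simp)
  set σ := (linHom ρ ρ).toInvariants N
  obtain ⟨f, hfN, hf⟩ := exists_isIntertwiningMap_ne_smul_id_of_not_isIrreducibleRep hρ.1 hres
  have hσ : σ.invariants ≠ ⊤ := fun htop => by
    have hfinv : f ∈ invariants ((linHom ρ ρ).comp N.subtype) := fun n =>
      (mem_linHom_invariants_iff_isIntertwining f).mpr hfN n
    obtain ⟨c, hc⟩ := hρ.exists_eq_smul_id <| (mem_linHom_invariants_iff_isIntertwining f).mp
      fun g => congr(Subtype.val $((htop ▸ Submodule.mem_top : ⟨f, hfinv⟩ ∈ σ.invariants) g))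
    exact hf c hc
  obtain ⟨χ, hχ, w, hw, hσw⟩ :=
    σ.exists_ne_one_forall_eq_smul_of_commute (commute_toInvariants _ N habelian) hσ
  have hrel : ∀ g v, ρ g (w.1 v) = (χ g : ℂ) • w.1 (ρ g v) := fun g v => by
    have h := LinearMap.congr_fun congr(Subtype.val $(hσw g)) (ρ g v)
    change ρ g (w.1 (ρ g⁻¹ (ρ g v))) = _ at h
    rwa [inv_self_apply] at h
  refine ⟨χ, hχ, fun n hn => ?_, ?_⟩
  · have hfix : σ n w = w := Subtype.ext ((mem_invariants _ _).mp w.2 ⟨n, hn⟩)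
    exact Units.ext <| smul_left_injective ℂ hw <| by simpa [hfix] using (hσw n).symm
  · have he : w.1 ≠ 0 := fun h => hw (Subtype.ext h)
    exact ⟨.ofBijective _ (hρ.bijective_of_twist χ he hrel), fun g v => by simp [hrel]⟩
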